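/- The homology of the chain complex (M, ∂_*) is isomorphic to ℤ ⊕ ℤ, with generators given by the homology classes of the closed elements (0, o₀) and (0, o₊) − (1, o₋). In particular, (0, o₊) − (1, o₋) lies in the kernel of ∂_*, and ker(∂_*)/im(∂_*) ≅ ℤ². -/

import Mathlib

/-- The four-element label set `O = {0, 1, -1, {1,-1}}`. -/
inductive OLabel : Type
  | o0 | op | om | o2
deriving DecidableEq

open Finsupp

/-- The value of the differential `∂_*` on a generator of the free `ℤ`-module on `ℤ × O`. -/
noncomputable def bnd : ℤ × OLabel → (ℤ × OLabel →₀ ℤ)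
  | (k, .o0) => 0
  | (k, .op) => single (k, .o0) 1 + single (k + 1, .o0) 1
  | (k, .om) => single (k, .o0) 1 + single (k - 1, .o0) 1
  | (k, .o2) => single (k, .om) 1 + single (k + 1, .om) 1
      - single (k, .op) 1 - single (k - 1, .op) 1

/-- The `ℤ`-linear differential `∂_*` on the free `ℤ`-module generated by `ℤ × O`. -/
noncomputable def dstar : (ℤ × OLabel →₀ ℤ) →ₗ[ℤ] (ℤ × OLabel →₀ ℤ) :=
  Finsupp.lift (ℤ × OLabel →₀ ℤ) ℤ (ℤ × OLabel) bnd

/-- The closed generator `(0, o₀)`. -/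
noncomputable def gen0 : ℤ × OLabel →₀ ℤ := Finsupp.single (0, .o0) 1

/-- The closed element `(0, o₊) − (1, o₋)`. -/
noncomputable def gen1 : ℤ × OLabel →₀ ℤ :=
  Finsupp.single (0, .op) 1 - Finsupp.single (1, .om) 1

/-!
The cycles `z k = (k, o₊) − (k + 1, o₋)` satisfy `z 0 = gen1` and `∂ (k, o₂) = −(z k + z (k − 1))`.
The map `proj : M → ℤ²` with `(k, o₀) ↦ ((−1)ᵏ, 0)`, `(k, o₊) ↦ (0, (−1)ᵏ)`, vanishing on `o₋` and
`o₂`, kills boundaries and sends `gen0`, `gen1` to the standard basis. It is a homotopy inverse of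
the inclusion of `ℤ²` via `gen0`, `gen1`: the homotopy sends `(k, o₀)` to the alternating sum of
the `o₋`-edges between `0` and `k`, which bounds `(k, o₀) − (−1)ᵏ (0, o₀)`, sends `(k, o₊)` to the
alternating sum of the `−(j, o₂)` between `0` and `k`, which bounds `z k − (−1)ᵏ z 0`, and vanishes
on `o₋` and `o₂`. Hence a cycle in the kernel of `proj` is a boundary.
-/

section AlternatingSum

variable {G H : Type*} [AddCommGroup G] [AddCommGroup H]

theorem Int.funext_of_add_one_add {u v : ℤ → G} (h₀ : u 0 = v 0)
    (h : ∀ k, u (k + 1) + u k = v (k + 1) + v k) : u = v := by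
  funext k
  induction k using Int.induction_on with
  | zero => exact h₀
  | succ k ih => simpa [ih] using h k
  | pred k ih => simpa [ih] using h (-k - 1)

/-- The solution of `a (k + 1) + a k = f (k + 1)` with `a 0 = 0`: the alternating sum of `f` over
`(0, k]` if `0 ≤ k` and over `(k, 0]` if `k < 0`, with sign `+` on the term nearest to `k`. -/
def altSum (f : ℤ → G) (k : ℤ) : G :=
  k.inductionOn' (motive := fun _ => G) 0 0 (fun k _ a => f (k + 1) - a) (fun k _ a => f k - a)

@[simp] theorem altSum_zero (f : ℤ → G) : altSum f 0 = 0 :=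
  Int.inductionOn'_self

theorem altSum_add_one_add (f : ℤ → G) (k : ℤ) : altSum f (k + 1) + altSum f k = f (k + 1) := by
  rcases le_or_gt 0 k with hk | hk
  · rw [altSum, Int.inductionOn'_add_one hk]
    exact sub_add_cancel _ _
  · obtain ⟨j, rfl⟩ : ∃ j, k = j - 1 := ⟨k + 1, by omega⟩
    rw [sub_add_cancel, altSum, altSum, Int.inductionOn'_sub_one (by omega)]
    exact add_sub_cancel _ _

theorem map_altSum {F : Type*} [FunLike F G H] [AddMonoidHomClass F G H] (φ : F) (f : ℤ → G)
    (k : ℤ) : φ (altSum f k) = altSum (fun j => φ (f j)) k := by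
  revert k
  rw [← funext_iff]
  refine Int.funext_of_add_one_add (by simp) fun k => ?_
  rw [← map_add, altSum_add_one_add, altSum_add_one_add]

theorem altSum_telescope (g : ℤ → G) (k : ℤ) :
    altSum (fun j => g j + g (j - 1)) k = g k - (k.negOnePow : ℤ) • g 0 := by
  revert k
  rw [← funext_iff]
  refine Int.funext_of_add_one_add (by simp) fun k => ?_
  rw [altSum_add_one_add, add_sub_cancel_right, Int.negOnePow_succ, Units.val_neg, neg_smul]
  abel

theorem altSum_add_altSum_sub_one (f : ℤ → G) (k : ℤ) : altSum f k + altSum f (k - 1) = f k := by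
  simpa using altSum_add_one_add f (k - 1)

end AlternatingSum

section Homology

open LinearMap Submodule

variable {R N M P V : Type*} [Ring R] [AddCommGroup N] [AddCommGroup M] [AddCommGroup P]
  [AddCommGroup V] [Module R N] [Module R M] [Module R P] [Module R V]
  {f : N →ₗ[R] M} {g : M →ₗ[R] P} {p : M →ₗ[R] V}

theorem ker_comp_subtype_eq_comap_range (hpf : p ∘ₗ f = 0)
    (hexact : ∀ x, g x = 0 → p x = 0 → x ∈ range f) :
    ker (p ∘ₗ (ker g).subtype) = (range f).comap (ker g).subtype := by
  ext ⟨x, hx⟩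
  constructor
  · exact hexact x hx
  · rintro ⟨y, rfl⟩
    exact LinearMap.congr_fun hpf y

noncomputable def homologyEquivOfExact (hpf : p ∘ₗ f = 0)
    (hexact : ∀ x, g x = 0 → p x = 0 → x ∈ range f) (hsurj : ∀ v, ∃ x, g x = 0 ∧ p x = v) :
    (ker g ⧸ (range f).comap (ker g).subtype) ≃ₗ[R] V :=
  (quotEquivOfEq _ _ (ker_comp_subtype_eq_comap_range hpf hexact).symm).trans
    ((p ∘ₗ (ker g).subtype).quotKerEquivOfSurjective fun v =>
      let ⟨x, hx, hpx⟩ := hsurj v; ⟨⟨x, hx⟩, hpx⟩)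

end Homology

local notation "M" => ℤ × OLabel →₀ ℤ

theorem dstar_single (a : ℤ × OLabel) : dstar (single a 1) = bnd a := by
  rw [dstar, lift_apply, sum_single_index (zero_smul ℤ (bnd a)), one_smul]

theorem dstar_gen0 : dstar gen0 = 0 := by
  rw [gen0, dstar_single, bnd]

noncomputable def opCycle (k : ℤ) : M := single (k, .op) 1 - single (k + 1, .om) 1

theorem opCycle_zero : opCycle 0 = gen1 := by
  rw [opCycle, zero_add, gen1]

theorem dstar_opCycle (k : ℤ) : dstar (opCycle k) = 0 := by
  rw [opCycle, map_sub, dstar_single, dstar_single, bnd, bnd, add_sub_cancel_right, add_comm,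
    sub_self]

theorem dstar_gen1 : dstar gen1 = 0 := by
  rw [← opCycle_zero, dstar_opCycle]

theorem dstar_single_o2 (k : ℤ) :
    dstar (single (k, .o2) 1) = -(opCycle k + opCycle (k - 1)) := by
  rw [dstar_single, bnd, opCycle, opCycle, sub_add_cancel]
  abel

noncomputable def omPath : ℤ → M := altSum fun j => single (j, .om) 1

noncomputable def o2Path : ℤ → M := altSum fun j => -single (j, .o2) 1

theorem omPath_add_omPath_sub_one (k : ℤ) : omPath k + omPath (k - 1) = single (k, .om) 1 :=
  altSum_add_altSum_sub_one _ k

theorem omPath_add_omPath_add_one (k : ℤ) : omPath k + omPath (k + 1) = single (k + 1, .om) 1 := by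
  rw [add_comm]; exact altSum_add_one_add _ k

theorem o2Path_add_o2Path_sub_one (k : ℤ) : o2Path k + o2Path (k - 1) = -single (k, .o2) 1 :=
  altSum_add_altSum_sub_one _ k

theorem dstar_omPath (k : ℤ) :
    dstar (omPath k) = single (k, .o0) 1 - (k.negOnePow : ℤ) • gen0 := by
  have hbnd : (fun j => dstar (single (j, .om) 1)) =
      fun j => single (j, .o0) 1 + single (j - 1, .o0) 1 :=
    funext fun j => dstar_single _
  rw [omPath, map_altSum, hbnd, altSum_telescope, gen0]

theorem dstar_o2Path (k : ℤ) : dstar (o2Path k) = opCycle k - (k.negOnePow : ℤ) • gen1 := by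
  have hbnd : (fun j => dstar (-single (j, .o2) 1)) = fun j => opCycle j + opCycle (j - 1) :=
    funext fun j => by rw [map_neg, dstar_single_o2, neg_neg]
  rw [o2Path, map_altSum, hbnd, altSum_telescope, opCycle_zero]

noncomputable def homotopy : M →ₗ[ℤ] M :=
  linearCombination ℤ fun
    | (k, .o0) => omPath k
    | (k, .op) => o2Path k
    | (_, .om) => 0
    | (_, .o2) => 0

noncomputable def proj : M →ₗ[ℤ] ℤ × ℤ :=
  linearCombination ℤ fun
    | (k, .o0) => ((k.negOnePow : ℤ), 0)
    | (k, .op) => (0, (k.negOnePow : ℤ))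
    | (_, .om) => 0
    | (_, .o2) => 0

noncomputable def incl : ℤ × ℤ →ₗ[ℤ] M :=
  (LinearMap.toSpanSingleton ℤ M gen0).coprod (LinearMap.toSpanSingleton ℤ M gen1)

theorem proj_comp_dstar : proj ∘ₗ dstar = 0 := by
  ext ⟨k, _ | _ | _ | _⟩ <;> simp [dstar_single, bnd, proj, Int.negOnePow_succ, Int.negOnePow_sub]

theorem dstar_comp_homotopy_add_homotopy_comp_dstar :
    dstar ∘ₗ homotopy + homotopy ∘ₗ dstar = LinearMap.id - incl ∘ₗ proj := by
  refine Finsupp.lhom_ext' fun ⟨k, l⟩ => LinearMap.ext_ring ?_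
  cases l <;>
    simp only [LinearMap.add_apply, LinearMap.sub_apply, LinearMap.comp_apply, LinearMap.id_apply,
      lsingle_apply, dstar_single, bnd, homotopy, proj, incl, linearCombination_single, one_smul,
      LinearMap.coprod_apply, LinearMap.toSpanSingleton_apply, map_add, map_sub, map_zero]
  case o0 => rw [dstar_omPath]; abel
  case op => rw [dstar_o2Path, omPath_add_omPath_add_one, opCycle]; abel
  case om => linear_combination (norm := module) omPath_add_omPath_sub_one k
  case o2 => linear_combination (norm := module) -o2Path_add_o2Path_sub_one k

theorem dstar_comp_incl : dstar ∘ₗ incl = 0 := by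
  ext <;> simp [incl, dstar_gen0, dstar_gen1]

theorem proj_gen0 : proj gen0 = (1, 0) := by
  simp [proj, gen0]

theorem proj_gen1 : proj gen1 = (0, 1) := by
  simp [proj, gen1]

theorem proj_comp_incl : proj ∘ₗ incl = LinearMap.id := by
  ext <;> simp [incl, proj_gen0, proj_gen1]

theorem mem_range_dstar_of_proj_eq_zero (x : M) (hx : dstar x = 0) (hpx : proj x = 0) :
    x ∈ LinearMap.range dstar := by
  refine ⟨homotopy x, ?_⟩
  simpa [hx, hpx] using LinearMap.congr_fun dstar_comp_homotopy_add_homotopy_comp_dstar x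

/-- The homology of `(M, ∂_*)` is `ℤ ⊕ ℤ`, generated by the classes of `(0, o₀)` and
`(0, o₊) − (1, o₋)`.  In particular `(0, o₊) − (1, o₋)` is closed. -/
theorem homology_of_dstar :
    dstar gen1 = 0 ∧
    ∀ (h0 : gen0 ∈ LinearMap.ker dstar) (h1 : gen1 ∈ LinearMap.ker dstar),
      ∃ e : (LinearMap.ker dstar ⧸
          (LinearMap.range dstar).comap (LinearMap.ker dstar).subtype) ≃ₗ[ℤ] ℤ × ℤ,
        e (Submodule.Quotient.mk
            (p := (LinearMap.range dstar).comap (LinearMap.ker dstar).subtype)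
            ⟨gen0, h0⟩) = (1, 0) ∧
        e (Submodule.Quotient.mk
            (p := (LinearMap.range dstar).comap (LinearMap.ker dstar).subtype)
            ⟨gen1, h1⟩) = (0, 1) := by
  refine ⟨dstar_gen1, fun h0 h1 => ?_⟩
  have hsurj (v : ℤ × ℤ) : ∃ x, dstar x = 0 ∧ proj x = v :=
    ⟨incl v, LinearMap.congr_fun dstar_comp_incl v, LinearMap.congr_fun proj_comp_incl v⟩
  exact ⟨homologyEquivOfExact proj_comp_dstar mem_range_dstar_of_proj_eq_zero hsurj, proj_gen0,
    proj_gen1⟩
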